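/- Let B₁, …, B_k ∈ M_n(ℝ₊) be upper triangular matrices with all entries bounded above by M > 0 and all diagonal entries bounded above by s > 0. Then every entry of the max-times product satisfies (B₁⊗B₂⊗⋯⊗B_k)_{ij} ≤ C·s^k where C := max{1, M^{n-1}·s^{-(n-1)}}. -/

import Mathlib

open Filter Topology

/-- Max-times matrix-vector product: `(A ⊗ x) i = max_k A i k * x k`. -/
noncomputable def mvec {n : ℕ} (A : Matrix (Fin n) (Fin n) ℝ) (x : Fin n → ℝ) : Fin n → ℝ :=
  fun i => ⨆ k, A i k * x k

/-- Max-times matrix product: `(A ⊗ B) i j = max_k A i k * B k j`. -/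
noncomputable def mmul {n : ℕ} (A B : Matrix (Fin n) (Fin n) ℝ) : Matrix (Fin n) (Fin n) ℝ :=
  fun i j => ⨆ k, A i k * B k j

/-- Max-times matrix power. -/
noncomputable def mpow {n : ℕ} (A : Matrix (Fin n) (Fin n) ℝ) : ℕ → Matrix (Fin n) (Fin n) ℝ
  | 0 => 1
  | k + 1 => mmul A (mpow A k)

/-- Max-times product of a list of matrices. -/
noncomputable def mlist {n : ℕ} : List (Matrix (Fin n) (Fin n) ℝ) → Matrix (Fin n) (Fin n) ℝ
  | [] => 1
  | B :: l => mmul B (mlist l)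

/-- The seminorm `η(A) := sup {‖A ⊗ x‖ / ‖x‖ : 0 ≠ x ∈ ℝ₊ⁿ}` induced by a norm `N`. -/
noncomputable def eta {n : ℕ} (N : (Fin n → ℝ) → ℝ) (A : Matrix (Fin n) (Fin n) ℝ) : ℝ :=
  sSup {t | ∃ x : Fin n → ℝ, x ≠ 0 ∧ (∀ i, 0 ≤ x i) ∧ t = N (mvec A x) / N x}

/-!
An entry of a max-times product of upper triangular matrices is a maximum over index paths
`i = p₀ ≤ p₁ ≤ ⋯ ≤ p_k = j` of products of entries. Writing every entry bound as `M ≤ c s` with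
`c = max 1 (M / s)`, each factor contributes `s`, and each of the at most `j - i` strict steps of the
path contributes an extra `c`; by induction on the list, the `(i, j)` entry is at most
`c ^ (j - i) * s ^ k ≤ c ^ (n - 1) * s ^ k`.
-/

section MaxTimes

variable {n : ℕ}

theorem mmul_blockTriangular {α : Type*} [LinearOrder α] {b : Fin n → α}
    {A B : Matrix (Fin n) (Fin n) ℝ} (hA : A.BlockTriangular b) (hB : B.BlockTriangular b) :
    (mmul A B).BlockTriangular b := by
  intro i j hij
  have hzero : ∀ p, A i p * B p j = 0 := fun p => by
    rcases lt_or_ge (b p) (b i) with hp | hp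
    · rw [hA hp, zero_mul]
    · rw [hB (hij.trans_le hp), mul_zero]
  simp only [mmul, hzero, Real.iSup_const_zero]

theorem mlist_blockTriangular {α : Type*} [LinearOrder α] {b : Fin n → α}
    {l : List (Matrix (Fin n) (Fin n) ℝ)} (hl : ∀ A ∈ l, A.BlockTriangular b) :
    (mlist l).BlockTriangular b := by
  induction l with
  | nil => exact Matrix.blockTriangular_one
  | cons A l ih =>
    rw [List.forall_mem_cons] at hl
    exact mmul_blockTriangular hl.1 (ih hl.2)

theorem mmul_nonneg {A B : Matrix (Fin n) (Fin n) ℝ} (hA : ∀ i j, 0 ≤ A i j)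
    (hB : ∀ i j, 0 ≤ B i j) (i j : Fin n) : 0 ≤ mmul A B i j :=
  Real.iSup_nonneg fun p => mul_nonneg (hA i p) (hB p j)

theorem mlist_nonneg {l : List (Matrix (Fin n) (Fin n) ℝ)} (hl : ∀ A ∈ l, ∀ i j, 0 ≤ A i j)
    (i j : Fin n) : 0 ≤ mlist l i j := by
  induction l generalizing i j with
  | nil => exact Matrix.zero_le_one_elem i j
  | cons A l ih =>
    rw [List.forall_mem_cons] at hl
    exact mmul_nonneg hl.1 (ih hl.2) i j

theorem mmul_apply_le {c s t : ℝ} (hc : 1 ≤ c) (hs : 0 ≤ s) (ht : 0 ≤ t)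
    {A B : Matrix (Fin n) (Fin n) ℝ} (hA₀ : ∀ i j, 0 ≤ A i j) (hAtri : A.BlockTriangular id)
    (hAdiag : ∀ i, A i i ≤ s) (hAoff : ∀ i j, i < j → A i j ≤ c * s)
    (hB₀ : ∀ i j, 0 ≤ B i j) (hBtri : B.BlockTriangular id)
    (hB : ∀ i j, B i j ≤ c ^ ((j : ℕ) - i) * t) (i j : Fin n) :
    mmul A B i j ≤ c ^ ((j : ℕ) - i) * (s * t) := by
  have hrhs : 0 ≤ c ^ ((j : ℕ) - i) * (s * t) :=
    mul_nonneg (pow_nonneg (zero_le_one.trans hc) _) (mul_nonneg hs ht)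
  refine Real.iSup_le (fun p => ?_) hrhs
  rcases lt_trichotomy p i with hpi | rfl | hip
  · rw [hAtri hpi, zero_mul]
    exact hrhs
  · calc A p p * B p j ≤ s * (c ^ ((j : ℕ) - p) * t) :=
          mul_le_mul (hAdiag p) (hB p j) (hB₀ p j) hs
      _ = c ^ ((j : ℕ) - p) * (s * t) := by ring
  · rcases lt_or_ge j p with hjp | hpj
    · rw [hBtri hjp, mul_zero]
      exact hrhs
    · have hexp : (j : ℕ) - p + 1 ≤ (j : ℕ) - i := by
        have := Fin.lt_def.1 hip
        have := Fin.le_def.1 hpj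
        omega
      calc A i p * B p j ≤ c * s * (c ^ ((j : ℕ) - p) * t) :=
            mul_le_mul (hAoff i p hip) (hB p j) (hB₀ p j) ((hA₀ i p).trans (hAoff i p hip))
        _ = c ^ ((j : ℕ) - p + 1) * (s * t) := by ring
        _ ≤ c ^ ((j : ℕ) - i) * (s * t) := by gcongr

theorem mlist_apply_le {c s : ℝ} (hc : 1 ≤ c) (hs : 0 ≤ s) {l : List (Matrix (Fin n) (Fin n) ℝ)}
    (h₀ : ∀ A ∈ l, ∀ i j, 0 ≤ A i j) (htri : ∀ A ∈ l, A.BlockTriangular id)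
    (hdiag : ∀ A ∈ l, ∀ i, A i i ≤ s) (hoff : ∀ A ∈ l, ∀ i j, i < j → A i j ≤ c * s)
    (i j : Fin n) : mlist l i j ≤ c ^ ((j : ℕ) - i) * s ^ l.length := by
  induction l generalizing i j with
  | nil =>
    rw [List.length_nil, pow_zero, mul_one]
    calc (1 : Matrix (Fin n) (Fin n) ℝ) i j ≤ 1 := by
          rw [Matrix.one_apply]
          split_ifs <;> norm_num
      _ ≤ c ^ ((j : ℕ) - i) := one_le_pow₀ hc
  | cons A l ih =>
    simp only [List.forall_mem_cons] at h₀ htri hdiag hoff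
    rw [List.length_cons, pow_succ']
    exact mmul_apply_le hc hs (pow_nonneg hs _) h₀.1 htri.1 hdiag.1 hoff.1 (mlist_nonneg h₀.2)
      (mlist_blockTriangular htri.2) (ih h₀.2 htri.2 hdiag.2 hoff.2) i j

end MaxTimes

theorem stmt9_general {n k : ℕ} (M s : ℝ) (hs : 0 < s)
    (B : Fin k → Matrix (Fin n) (Fin n) ℝ)
    (hpos : ∀ r i j, 0 ≤ B r i j)
    (htri : ∀ (r : Fin k) (i j : Fin n), (j : ℕ) < (i : ℕ) → B r i j = 0)
    (hbM : ∀ r i j, B r i j ≤ M)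
    (hbs : ∀ r i, B r i i ≤ s)
    (i j : Fin n) :
    mlist ((List.finRange k).map B) i j
      ≤ max 1 (M ^ (n - 1) * s ^ (-((n - 1 : ℕ) : ℤ))) * s ^ k := by
  set c := max 1 (M / s)
  have hc : 1 ≤ c := le_max_left _ _
  have hMc : M ≤ c * s := (div_le_iff₀ hs).1 (le_max_right _ _)
  have hbound := mlist_apply_le hc hs.le (l := (List.finRange k).map B)
    (List.forall_mem_map.2 fun r _ => hpos r)
    (List.forall_mem_map.2 fun r _ _ _ h => htri r _ _ h)
    (List.forall_mem_map.2 fun r _ => hbs r)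
    (List.forall_mem_map.2 fun r _ i j _ => (hbM r i j).trans hMc) i j
  rw [List.length_map, List.length_finRange] at hbound
  refine hbound.trans (mul_le_mul_of_nonneg_right ?_ (pow_nonneg hs.le k))
  calc c ^ ((j : ℕ) - i) ≤ c ^ (n - 1) := pow_le_pow_right₀ hc (by omega)
    _ ≤ max 1 ((M / s) ^ (n - 1)) := by
      rcases le_total (M / s) 1 with h | h
      · rw [show c = 1 from max_eq_left h, one_pow]
        exact le_max_left _ _
      · rw [show c = M / s from max_eq_right h, max_eq_right (one_le_pow₀ h)]
    _ = max 1 (M ^ (n - 1) * s ^ (-((n - 1 : ℕ) : ℤ))) := by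
      rw [div_pow, zpow_neg, zpow_natCast, div_eq_mul_inv]

theorem stmt9 {n k : ℕ} (M s : ℝ) (hM : 0 < M) (hs : 0 < s)
    (B : Fin k → Matrix (Fin n) (Fin n) ℝ)
    (hpos : ∀ r i j, 0 ≤ B r i j)
    (htri : ∀ (r : Fin k) (i j : Fin n), (j : ℕ) < (i : ℕ) → B r i j = 0)
    (hbM : ∀ r i j, B r i j ≤ M)
    (hbs : ∀ r i, B r i i ≤ s)
    (i j : Fin n) :
    mlist ((List.finRange k).map B) i j
      ≤ max 1 (M ^ (n - 1) * s ^ (-((n - 1 : ℕ) : ℤ))) * s ^ k :=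
  stmt9_general M s hs B hpos htri hbM hbs i j
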